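/- Let G be a finite simple graph on vertex set V with initial coloring c₀ : V → A and update functions f : ℕ → A → Multiset A → A, and fix t ∈ ℕ and v ∈ V. Let H be the subgraph of G induced on the closed t-ball B_t(v), with initial coloring the restriction of c₀ to B_t(v) and the same update functions, where neighbor multisets are taken within H. Then the t-step iterated message-passing coloring of v computed in H equals the t-step iterated message-passing coloring of v computed in G. -/

import Mathlib

/-- The multiset of `c`-values of the neighbors of `v` in `G`. -/
def nbrMultiset {V A : Type*} [Fintype V] (G : SimpleGraph V) [DecidableRel G.Adj]
    (c : V → A) (v : V) : Multiset A :=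
  (G.neighborFinset v).val.map c

/-- Iterated message-passing colorings: `c_{t+1}(v) = f_t (c_t v) (M_{c_t} v)`. -/
def iterColor {V A : Type*} [Fintype V] (G : SimpleGraph V) [DecidableRel G.Adj]
    (c₀ : V → A) (f : ℕ → A → Multiset A → A) : ℕ → V → A
  | 0 => c₀
  | (t + 1) => fun v =>
      f t (iterColor G c₀ f t v) (nbrMultiset G (iterColor G c₀ f t) v)

/-- The closed `t`-ball around `v` in `G`: vertices reachable from `v` by a walk of
length at most `t`. -/
def ball {V : Type*} (G : SimpleGraph V) (v : V) (t : ℕ) : Set V :=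
  {u | ∃ w : G.Walk v u, w.length ≤ t}

/-
Message passing is local: after `s` rounds the color of `u` depends only on the initial colors
and the adjacency inside the `s`-ball around `u`. Inductively, the `(s+1)`-ball of `u` contains
the `s`-balls of `u` and of all its neighbours, so any induced subgraph containing it sees the
same previous colors at `u` and at its neighbours, hence the same neighbour multiset.
-/

section Locality

variable {V A : Type*}

theorem mem_ball_self (G : SimpleGraph V) (v : V) (t : ℕ) : v ∈ ball G v t :=
  ⟨SimpleGraph.Walk.nil, Nat.zero_le t⟩

theorem ball_mono (G : SimpleGraph V) (v : V) {s t : ℕ} (hst : s ≤ t) :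
    ball G v s ⊆ ball G v t :=
  fun _ ⟨w, hw⟩ => ⟨w, hw.trans hst⟩

theorem ball_subset_ball_succ_of_adj {G : SimpleGraph V} {u x : V} (hux : G.Adj u x) (s : ℕ) :
    ball G x s ⊆ ball G u (s + 1) :=
  fun _ ⟨w, hw⟩ => ⟨SimpleGraph.Walk.cons hux w, by rw [SimpleGraph.Walk.length_cons]; omega⟩

theorem neighborSet_subset_ball_succ (G : SimpleGraph V) (u : V) (s : ℕ) :
    G.neighborSet u ⊆ ball G u (s + 1) :=
  fun x hux => ball_subset_ball_succ_of_adj hux s (mem_ball_self G x s)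

theorem nbrMultiset_induce_of_neighborSet_subset [Fintype V] {G : SimpleGraph V}
    [DecidableRel G.Adj] {S : Set V} [DecidablePred (· ∈ S)] [DecidableRel (G.induce S).Adj]
    {u : S} (hS : G.neighborSet u ⊆ S) {c' : S → A} {c : V → A}
    (hc : ∀ x : S, G.Adj u x → c' x = c x) :
    nbrMultiset (G.induce S) c' u = nbrMultiset G c u := by
  have h_nbrs : ((G.induce S).neighborFinset u).map (.subtype (· ∈ S)) = G.neighborFinset u := by
    convert G.map_neighborFinset_induce_of_neighborSet_subset hS
  rw [nbrMultiset, nbrMultiset, ← h_nbrs, Finset.map_val, Multiset.map_map]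
  refine Multiset.map_congr rfl fun x hx => hc x ?_
  exact (G.induce S).mem_neighborFinset u x |>.mp (Finset.mem_val.mp hx)

theorem iterColor_induce_of_ball_subset [Fintype V] (G : SimpleGraph V) [DecidableRel G.Adj]
    {S : Set V} [DecidablePred (· ∈ S)] [DecidableRel (G.induce S).Adj]
    (c₀ : V → A) (f : ℕ → A → Multiset A → A) (s : ℕ) (u : S) (hS : ball G u s ⊆ S) :
    iterColor (G.induce S) (fun x => c₀ x) f s u = iterColor G c₀ f s u := by
  induction s generalizing u with
  | zero => rfl
  | succ s ih =>
    have h_self : iterColor (G.induce S) (fun x => c₀ x) f s u = iterColor G c₀ f s u :=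
      ih u ((ball_mono G u s.le_succ).trans hS)
    have h_nbr (x : S) (hux : G.Adj u x) :
        iterColor (G.induce S) (fun x => c₀ x) f s x = iterColor G c₀ f s x :=
      ih x ((ball_subset_ball_succ_of_adj hux s).trans hS)
    simp only [iterColor]
    rw [h_self, nbrMultiset_induce_of_neighborSet_subset
      ((neighborSet_subset_ball_succ G u s).trans hS) h_nbr]
end Locality

/-- The `t`-step iterated message-passing coloring of `v` computed in the subgraph of `G`
induced on the closed `t`-ball around `v` equals the one computed in `G`. -/
theorem stmt9 {V A : Type*} [Fintype V] (G : SimpleGraph V) [DecidableRel G.Adj]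
    (c₀ : V → A) (f : ℕ → A → Multiset A → A) (t : ℕ) (v : V) :
    haveI : DecidablePred (· ∈ ball G v t) := Classical.decPred _
    haveI : DecidableRel (G.induce (ball G v t)).Adj := Classical.decRel _
    iterColor (G.induce (ball G v t)) (fun u => c₀ (u : V)) f t
        ⟨v, ⟨SimpleGraph.Walk.nil, Nat.zero_le t⟩⟩ =
      iterColor G c₀ f t v := by
  classical
  -- `convert` identifies the statement's `Classical.dec*` instances with the derived ones.
  convert iterColor_induce_of_ball_subset G c₀ f t ⟨v, mem_ball_self G v t⟩ subset_rfl
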